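/- arXiv:2104.07194 — 2 statements merged into one kernel-verified Lean document; each statement's English description precedes it below -/
import Mathlib

section
/- Fix q ∈ (0,1/2) and p̄ > 0, and let f(x) = x · h2((p̄/x) ⋆ q). For every x > 2p̄, f is differentiable at x with derivative f'(x) = h2((p̄/x) ⋆ q) + (2q−1)·(p̄/x)·log₂((1 − (p̄/x) ⋆ q)/((p̄/x) ⋆ q)), and this derivative is strictly positive. -/
/-- Binary entropy (base 2), with the conventions `h2 0 = h2 1 = 0`
(automatic since `Real.log 0 = 0`). -/
noncomputable def h2 (y : ℝ) : ℝ := -(y * Real.logb 2 y) - (1 - y) * Real.logb 2 (1 - y)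

/-- For `x, y ∈ [0,1]`, `x ⋆ y = x(1−y) + y(1−x)`. -/
noncomputable def bstar (x y : ℝ) : ℝ := x * (1 - y) + y * (1 - x)

/-!
With `p = p̄/x` and `s = p ⋆ q = q + (1 - 2q) p`, the chain rule and `h2' s = log₂((1-s)/s)` give
the stated derivative. Since `(2q - 1) p = q - s` and `h2 s = s log₂((1-s)/s) - log₂(1-s)`, the
derivative equals `q log₂((1-s)/s) - log₂(1-s)`, which is positive because `0 < s < 1/2`.
-/

open Real Set

lemma h2_eq_binEntropy_div_log_two (y : ℝ) : h2 y = binEntropy y / log 2 := by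
  simp only [h2, binEntropy, logb, log_inv]
  ring

lemma hasDerivAt_h2 {y : ℝ} (hy₀ : y ≠ 0) (hy₁ : y ≠ 1) :
    HasDerivAt h2 (logb 2 ((1 - y) / y)) y := by
  rw [funext h2_eq_binEntropy_div_log_two, logb, log_div (sub_ne_zero.mpr hy₁.symm) hy₀]
  exact (hasDerivAt_binEntropy hy₀ hy₁).div_const _

lemma h2_eq_mul_logb_sub_logb {s : ℝ} (hs₀ : s ≠ 0) (hs₁ : s ≠ 1) :
    h2 s = s * logb 2 ((1 - s) / s) - logb 2 (1 - s) := by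
  rw [h2, logb_div (sub_ne_zero.mpr hs₁.symm) hs₀]
  ring

lemma h2_add_mul_logb_pos {q s : ℝ} (hq : 0 ≤ q) (hs₀ : 0 < s) (hs : s < 1 / 2) :
    0 < h2 s + (q - s) * logb 2 ((1 - s) / s) := by
  have hodds : 0 < logb 2 ((1 - s) / s) :=
    logb_pos one_lt_two ((one_lt_div hs₀).mpr (by linarith))
  have hlog : logb 2 (1 - s) < 0 := logb_neg one_lt_two (by linarith) (by linarith)
  calc 0 < q * logb 2 ((1 - s) / s) - logb 2 (1 - s) := by nlinarith
    _ = h2 s + (q - s) * logb 2 ((1 - s) / s) := by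
      rw [h2_eq_mul_logb_sub_logb hs₀.ne' (by linarith)]
      ring

lemma bstar_eq_add_mul (p q : ℝ) : bstar p q = q + (1 - 2 * q) * p := by
  rw [bstar]
  ring

lemma HasDerivAt.bstar_left {f : ℝ → ℝ} {f' x : ℝ} (q : ℝ) (hf : HasDerivAt f f' x) :
    HasDerivAt (fun t => bstar (f t) q) ((1 - 2 * q) * f') x := by
  simp only [bstar_eq_add_mul]
  exact (hf.const_mul _).const_add q

lemma bstar_mem_Ioo_zero_half {p q : ℝ} (hp : p ∈ Ioo (0 : ℝ) (1 / 2))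
    (hq : q ∈ Ioo (0 : ℝ) (1 / 2)) : bstar p q ∈ Ioo (0 : ℝ) (1 / 2) := by
  obtain ⟨hp₀, hp⟩ := hp
  obtain ⟨hq₀, hq⟩ := hq
  rw [bstar_eq_add_mul]
  constructor <;> nlinarith

/-- For `q ∈ (0,1/2)`, `p̄ > 0` and `x > 2p̄`, the function
`f(x) = x · h2((p̄/x) ⋆ q)` is differentiable at `x` with derivative
`h2((p̄/x) ⋆ q) + (2q−1)·(p̄/x)·log₂((1 − (p̄/x) ⋆ q)/((p̄/x) ⋆ q))`,
and this derivative is strictly positive. -/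
theorem hasDerivAt_mul_h2_star (q pbar x : ℝ) (hq : q ∈ Set.Ioo (0 : ℝ) (1/2))
    (hpbar : 0 < pbar) (hx : 2 * pbar < x) :
    HasDerivAt (fun x : ℝ => x * h2 (bstar (pbar / x) q))
      (h2 (bstar (pbar / x) q) +
        (2 * q - 1) * (pbar / x) *
          Real.logb 2 ((1 - bstar (pbar / x) q) / bstar (pbar / x) q)) x ∧
    0 < h2 (bstar (pbar / x) q) +
        (2 * q - 1) * (pbar / x) *
          Real.logb 2 ((1 - bstar (pbar / x) q) / bstar (pbar / x) q) := by
  have hx₀ : 0 < x := by linarith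
  have hp : pbar / x ∈ Ioo (0 : ℝ) (1 / 2) :=
    ⟨div_pos hpbar hx₀, by rw [div_lt_iff₀ hx₀]; linarith⟩
  obtain ⟨hs₀, hs⟩ := bstar_mem_Ioo_zero_half hp hq
  have hslope : (2 * q - 1) * (pbar / x) = q - bstar (pbar / x) q := by
    rw [bstar_eq_add_mul]
    ring
  refine ⟨?_, hslope ▸ h2_add_mul_logb_pos hq.1.le hs₀ hs⟩
  have hpbar_div : HasDerivAt (fun t => pbar / t) (pbar * -(x ^ 2)⁻¹) x := by
    simpa only [div_eq_mul_inv] using (hasDerivAt_inv hx₀.ne').const_mul pbar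
  refine ((hasDerivAt_id' x).mul
    ((hasDerivAt_h2 hs₀.ne' (by linarith)).comp x (hpbar_div.bstar_left q))).congr_deriv ?_
  simp only [Function.comp_apply]
  field_simp
  ring
end

section
/- Fix q ∈ [0,1/2) and let p₀ ∈ (0,1/2) be the unique solution in (0,1/2) of 4 + (1+2q)·log₂(p₀ ⋆ q) + (3−2q)·log₂(1 − p₀ ⋆ q) = 0. For every p with 0 ≤ p ≤ p₀ and p < 1/4, the minimum over x ∈ [0,p] of the function f(x) = (1−4p+4x)·(1 − h2((x/(1−4p+4x)) ⋆ q)) equals 1 − h2(p ⋆ q), and it is attained at x = p. -/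
/-!
Write `t = 1 - 4p + 4x`, `s = p ⋆ q` and `a = (x / t) ⋆ q`. Bounding the concave `h2` at `a` by
its tangent line at `s`, and using `t (a - s) = (x - p)(1 - 4p)(1 - 2q)`, gives
`f x ≥ f p + (x - p) ψ(s)` with `ψ(y) = 4 + (1 + 2q) log₂ y + (3 - 2q) log₂ (1 - y)`.
Now `ψ` increases up to `(1 + 2q)/4`, decreases afterwards, and vanishes at `1/2`; so its root
`p₀ ⋆ q < 1/2` lies strictly on the increasing branch, and `ψ(s) ≤ 0` for `s ≤ p₀ ⋆ q`.
-/

open Real Set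

lemma sub_le_mul_log_sub_log {a s : ℝ} (ha : 0 ≤ a) (hs : 0 < s) :
    a - s ≤ a * (log a - log s) := by
  rcases ha.eq_or_lt with rfl | ha
  · simpa using hs.le
  have h := mul_le_mul_of_nonneg_left (one_sub_inv_le_log_of_pos (div_pos ha hs)) ha.le
  rw [log_div ha.ne' hs.ne', inv_div, mul_sub, mul_div_cancel₀ _ ha.ne', mul_one] at h
  exact h

lemma h2_eq_log (y : ℝ) : h2 y = (-(y * log y) - (1 - y) * log (1 - y)) / log 2 := by
  simp only [h2, logb]; ring

/-- `logb 2 (1 - s) - logb 2 s` is the derivative of `h2` at `s`. -/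
lemma h2_le_tangent {a s : ℝ} (ha : a ∈ Icc 0 1) (hs : s ∈ Ioo 0 1) :
    h2 a ≤ h2 s + (a - s) * (logb 2 (1 - s) - logb 2 s) := by
  have h₁ := sub_le_mul_log_sub_log ha.1 hs.1
  have h₂ := sub_le_mul_log_sub_log (sub_nonneg.2 ha.2) (sub_pos.2 hs.2)
  have hrhs : h2 s + (a - s) * (logb 2 (1 - s) - logb 2 s)
      = (-(a * log s) - (1 - a) * log (1 - s)) / log 2 := by
    simp only [h2, logb]; ring
  rw [h2_eq_log, hrhs, div_le_div_iff_of_pos_right (log_pos one_lt_two)]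
  linarith

section LogProfile

variable {α β y : ℝ}

lemma hasDerivAt_mul_log_add_mul_log_one_sub (hy₀ : 0 < y) (hy₁ : y < 1) :
    HasDerivAt (fun y => α * log y + β * log (1 - y))
      ((α - (α + β) * y) / (y * (1 - y))) y := by
  have h := (((hasDerivAt_id y).log hy₀.ne').const_mul α).add
    ((((hasDerivAt_id y).const_sub 1).log (sub_pos.2 hy₁).ne').const_mul β)
  refine h.congr_deriv ?_
  rw [id]
  field_simp [hy₀.ne', (sub_pos.2 hy₁).ne']
  ring

lemma strictMonoOn_mul_log_add_mul_log_one_sub (hα : 0 < α) (hβ : 0 < β) :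
    StrictMonoOn (fun y => α * log y + β * log (1 - y)) (Ioc 0 (α / (α + β))) := by
  have hc : α / (α + β) < 1 := (div_lt_one (by linarith)).2 (by linarith)
  apply strictMonoOn_of_deriv_pos (convex_Ioc _ _)
  · intro y hy
    exact (hasDerivAt_mul_log_add_mul_log_one_sub hy.1 (hy.2.trans_lt hc)).continuousAt
      |>.continuousWithinAt
  · intro y hy
    rw [interior_Ioc] at hy
    have hy₁ : y < 1 := hy.2.trans hc
    rw [(hasDerivAt_mul_log_add_mul_log_one_sub hy.1 hy₁).deriv]
    have : (α + β) * y < α := (lt_div_iff₀' (by linarith)).1 hy.2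
    exact div_pos (by linarith) (mul_pos hy.1 (by linarith))

lemma strictAntiOn_mul_log_add_mul_log_one_sub (hα : 0 < α) (hβ : 0 < β) :
    StrictAntiOn (fun y => α * log y + β * log (1 - y)) (Ico (α / (α + β)) 1) := by
  have hc : 0 < α / (α + β) := div_pos hα (by linarith)
  apply strictAntiOn_of_deriv_neg (convex_Ico _ _)
  · intro y hy
    exact (hasDerivAt_mul_log_add_mul_log_one_sub (hc.trans_le hy.1) hy.2).continuousAt
      |>.continuousWithinAt
  · intro y hy
    rw [interior_Ico] at hy
    have hy₀ : 0 < y := hc.trans hy.1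
    rw [(hasDerivAt_mul_log_add_mul_log_one_sub hy₀ hy.2).deriv]
    have : α < (α + β) * y := (div_lt_iff₀' (by linarith)).1 hy.1
    exact div_neg_of_neg_of_pos (by linarith) (mul_pos hy₀ (by linarith [hy.2]))

end LogProfile

/-- `psi q (p ⋆ q)` is the derivative at `x = p` of
`x ↦ (1 - 4p + 4x) (1 - h2 ((x / (1 - 4p + 4x)) ⋆ q))`. -/
noncomputable def psi (q y : ℝ) : ℝ :=
  4 + (1 + 2 * q) * logb 2 y + (3 - 2 * q) * logb 2 (1 - y)

lemma psi_eq (q y : ℝ) :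
    psi q y = 4 + ((1 + 2 * q) * log y + (3 - 2 * q) * log (1 - y)) / log 2 := by
  simp only [psi, logb]; ring

lemma psi_half (q : ℝ) : psi q (1 / 2) = 0 := by
  have : logb 2 (1 / 2) = -1 := by simp [logb_inv]
  rw [psi, show (1 : ℝ) - 1 / 2 = 1 / 2 by norm_num, this]
  ring

section Psi

variable {q s s₀ : ℝ} (hq : q ∈ Ioo (-1 / 2) (1 / 2))
include hq

lemma strictMonoOn_psi : StrictMonoOn (psi q) (Ioc 0 ((1 + 2 * q) / 4)) := by
  have h := strictMonoOn_mul_log_add_mul_log_one_sub (α := 1 + 2 * q) (β := 3 - 2 * q)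
    (by linarith [hq.1]) (by linarith [hq.2])
  rw [show (1 + 2 * q) / (1 + 2 * q + (3 - 2 * q)) = (1 + 2 * q) / 4 by ring] at h
  intro a ha b hb hab
  rw [psi_eq, psi_eq]
  linarith [div_lt_div_of_pos_right (h ha hb hab) (log_pos one_lt_two)]

lemma strictAntiOn_psi : StrictAntiOn (psi q) (Ico ((1 + 2 * q) / 4) 1) := by
  have h := strictAntiOn_mul_log_add_mul_log_one_sub (α := 1 + 2 * q) (β := 3 - 2 * q)
    (by linarith [hq.1]) (by linarith [hq.2])
  rw [show (1 + 2 * q) / (1 + 2 * q + (3 - 2 * q)) = (1 + 2 * q) / 4 by ring] at h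
  intro a ha b hb hab
  rw [psi_eq, psi_eq]
  linarith [div_lt_div_of_pos_right (h ha hb hab) (log_pos one_lt_two)]

lemma lt_of_psi_eq_zero (hs₀ : s₀ < 1 / 2) (h : psi q s₀ = 0) : s₀ < (1 + 2 * q) / 4 := by
  by_contra! hle
  have := strictAntiOn_psi hq ⟨hle, by linarith⟩ ⟨hle.trans hs₀.le, by norm_num⟩ hs₀
  rw [h, psi_half] at this
  exact this.false

lemma psi_nonpos_of_le (hs : 0 < s) (hss₀ : s ≤ s₀) (hs₀ : s₀ < 1 / 2)
    (h : psi q s₀ = 0) : psi q s ≤ 0 :=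
  h ▸ (strictMonoOn_psi hq).monotoneOn ⟨hs, hss₀.trans (lt_of_psi_eq_zero hq hs₀ h).le⟩
    ⟨hs.trans_le hss₀, (lt_of_psi_eq_zero hq hs₀ h).le⟩ hss₀

end Psi

lemma bstar_sub_bstar (u p q : ℝ) : bstar u q - bstar p q = (u - p) * (1 - 2 * q) := by
  unfold bstar; ring

lemma bstar_mem_Icc {u q : ℝ} (hu : u ∈ Icc 0 1) (hq : q ∈ Icc 0 1) :
    bstar u q ∈ Icc 0 1 := by
  have := mul_nonneg hu.1 hq.1
  have := mul_nonneg hu.1 (sub_nonneg.2 hq.2)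
  have := mul_nonneg hq.1 (sub_nonneg.2 hu.2)
  have := mul_nonneg (sub_nonneg.2 hu.2) (sub_nonneg.2 hq.2)
  constructor <;> unfold bstar <;> linarith

lemma le_mul_one_sub_h2_bstar {p q x : ℝ} (hq : q ∈ Icc 0 1) (hp : p < 1 / 4) (hx : 0 ≤ x)
    (hs : bstar p q ∈ Ioo 0 1) :
    1 - h2 (bstar p q) + (x - p) * psi q (bstar p q)
      ≤ (1 - 4 * p + 4 * x) * (1 - h2 (bstar (x / (1 - 4 * p + 4 * x)) q)) := by
  set t := 1 - 4 * p + 4 * x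
  have ht : 0 < t := by linarith
  have hu : x / t ∈ Icc 0 1 := ⟨div_nonneg hx ht.le, (div_le_one ht).2 (by linarith)⟩
  have hdiff : t * (bstar (x / t) q - bstar p q) = (x - p) * (1 - 4 * p) * (1 - 2 * q) := by
    rw [bstar_sub_bstar]
    linear_combination (1 - 2 * q) * mul_div_cancel₀ x ht.ne'
  have htan := mul_le_mul_of_nonneg_left (h2_le_tangent (bstar_mem_Icc hu hq) hs) ht.le
  generalize bstar (x / t) q = a at hdiff htan ⊢
  have hs_eq : bstar p q = p * (1 - q) + q * (1 - p) := rfl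
  generalize bstar p q = s at hs_eq htan hdiff ⊢
  simp only [h2, psi] at htan ⊢
  linear_combination htan + (logb 2 (1 - s) - logb 2 s) * hdiff
    + 4 * (x - p) * (logb 2 (1 - s) - logb 2 s) * hs_eq

theorem min_on_small_p_general (q p₀ p : ℝ) (hq : q ∈ Set.Ico (0 : ℝ) (1/2))
    (hp₀ : p₀ ∈ Set.Ioo (0 : ℝ) (1/2))
    (heq : 4 + (1 + 2*q) * Real.logb 2 (bstar p₀ q)
        + (3 - 2*q) * Real.logb 2 (1 - bstar p₀ q) = 0)
    (hpp₀ : p ≤ p₀) :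
    (∀ x ∈ Set.Icc (0 : ℝ) p,
        1 - h2 (bstar p q)
          ≤ (1 - 4*p + 4*x) * (1 - h2 (bstar (x / (1 - 4*p + 4*x)) q))) ∧
    (1 - 4*p + 4*p) * (1 - h2 (bstar (p / (1 - 4*p + 4*p)) q)) = 1 - h2 (bstar p q) := by
  refine ⟨fun x ⟨hx, hxp⟩ => ?_, by norm_num⟩
  rcases hxp.eq_or_lt with rfl | hxp
  · norm_num
  have hq' : q ∈ Ioo (-1 / 2) (1 / 2) := ⟨by linarith [hq.1], hq.2⟩
  have hs₀ : bstar p₀ q < 1 / 2 := by unfold bstar; nlinarith [hp₀.2, hq.2]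
  have hpeak : bstar p₀ q < (1 + 2 * q) / 4 := lt_of_psi_eq_zero hq' hs₀ heq
  have hp : p < 1 / 4 := by unfold bstar at hpeak; nlinarith [hq.2]
  have hss₀ : bstar p q ≤ bstar p₀ q := by
    have := bstar_sub_bstar p p₀ q; nlinarith [hq.2]
  have hs : 0 < bstar p q := by unfold bstar; nlinarith [hq.1, hq.2]
  have hψ := psi_nonpos_of_le hq' hs hss₀ hs₀ heq
  have key := le_mul_one_sub_h2_bstar ⟨hq.1, by linarith [hq.2]⟩ hp hx ⟨hs, by linarith⟩
  linarith [mul_nonneg (sub_nonneg.2 hxp.le) (neg_nonneg.2 hψ)]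

/-- Fix `q ∈ [0,1/2)` and let `p₀ ∈ (0,1/2)` solve
`4 + (1+2q)·log₂(p₀ ⋆ q) + (3−2q)·log₂(1 − p₀ ⋆ q) = 0`.  For `0 ≤ p ≤ p₀` with
`p < 1/4`, the minimum over `x ∈ [0,p]` of
`f(x) = (1−4p+4x)·(1 − h2((x/(1−4p+4x)) ⋆ q))` equals `1 − h2(p ⋆ q)` and is
attained at `x = p`. -/
theorem min_on_small_p (q p₀ p : ℝ) (hq : q ∈ Set.Ico (0 : ℝ) (1/2))
    (hp₀ : p₀ ∈ Set.Ioo (0 : ℝ) (1/2))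
    (heq : 4 + (1 + 2*q) * Real.logb 2 (bstar p₀ q)
        + (3 - 2*q) * Real.logb 2 (1 - bstar p₀ q) = 0)
    (hp0 : 0 ≤ p) (hpp₀ : p ≤ p₀) (hp14 : p < 1/4) :
    (∀ x ∈ Set.Icc (0 : ℝ) p,
        1 - h2 (bstar p q)
          ≤ (1 - 4*p + 4*x) * (1 - h2 (bstar (x / (1 - 4*p + 4*x)) q))) ∧
    (1 - 4*p + 4*p) * (1 - h2 (bstar (p / (1 - 4*p + 4*p)) q)) = 1 - h2 (bstar p q) :=
  min_on_small_p_general q p₀ p hq hp₀ heq hpp₀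
end
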